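/- arXiv:2203.01106 — 2 statements merged into one kernel-verified Lean document; each statement's English description precedes it below -/
import Mathlib

section
/- Conversely, let Φ : Γ̃ → ℂ^× be a group homomorphism and w a rational number with Φ(I₃,1) = e^{2πi w}. Then ℓ(g,τ) = Φ(g,0)·exp(w·j̃(g,τ)) is a multiplier system on Γ of weight w; in particular if w = a/b then ℓ(g,τ)^b = Φ(g,0)^b · j(g,τ)^a. -/
noncomputable section

open Matrix Complex

/-- The Hermitian form matrix `J`. -/
def Jmat : Matrix (Fin 3) (Fin 3) ℂ := !![0,0,1; 0,1,0; 1,0,0]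

/-- The group `SU(2,1)` as a subset of 3×3 complex matrices. -/
def SU21 : Set (Matrix (Fin 3) (Fin 3) ℂ) :=
  {g | g.det = 1 ∧ gᴴ * Jmat * g = Jmat}

/-- The symmetric space `H = {τ ∈ ℂ² : 2 Re τ₁ + |τ₂|² < 0}`. -/
def UpperH : Set (ℂ × ℂ) := {τ | 2 * τ.1.re + Complex.normSq τ.2 < 0}

/-- The automorphy factor `j(g,τ) = Cτ + D`. -/
def jcocycle (g : Matrix (Fin 3) (Fin 3) ℂ) (τ : ℂ × ℂ) : ℂ :=
  g 2 0 * τ.1 + g 2 1 * τ.2 + g 2 2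

/-- The action `g*τ = (Aτ+B)/(Cτ+D)`. -/
def act (g : Matrix (Fin 3) (Fin 3) ℂ) (τ : ℂ × ℂ) : ℂ × ℂ :=
  ((g 0 0 * τ.1 + g 0 1 * τ.2 + g 0 2) / jcocycle g τ,
   (g 1 0 * τ.1 + g 1 1 * τ.2 + g 1 2) / jcocycle g τ)

/-- The function `X(g)`: minus the bottom-left entry when that is nonzero,
and otherwise the bottom-right entry. -/
def Xfun (g : Matrix (Fin 3) (Fin 3) ℂ) : ℂ :=
  if g 2 0 ≠ 0 then -(g 2 0) else g 2 2

/-- The branch `j̃(g,τ) = log(j(g,τ)/X(g)) + log(X(g))` of `log j(g,τ)`,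
using the principal branch of `log` (imaginary part in `(-π, π]`). -/
def jtilde (g : Matrix (Fin 3) (Fin 3) ℂ) (τ : ℂ × ℂ) : ℂ :=
  Complex.log (jcocycle g τ / Xfun g) + Complex.log (Xfun g)

/-- A fixed base point of `H`. -/
def τ0 : ℂ × ℂ := (-1, 0)

/-- The (complex-valued expression for the) cocycle
`σ(g,h) = (1/2πi)(j̃(gh,τ) − j̃(g,h*τ) − j̃(h,τ))`, evaluated at the base
point `τ0 ∈ H`. -/
def sigmaC (g h : Matrix (Fin 3) (Fin 3) ℂ) : ℂ :=
  (jtilde (g * h) τ0 - jtilde g (act h τ0) - jtilde h τ0) / (2 * Real.pi * Complex.I)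

/-- The integer-valued cocycle `σ` (for `g,h ∈ SU(2,1)` the quantity `sigmaC g h`
is an integer, so taking the floor of its real part recovers it). -/
def sigmaZ (g h : Matrix (Fin 3) (Fin 3) ℂ) : ℤ := ⌊(sigmaC g h).re⌋

/-- The twisted multiplication on `SU(2,1) × ℤ` defining the universal cover. -/
def gmul (p q : Matrix (Fin 3) (Fin 3) ℂ × ℤ) : Matrix (Fin 3) (Fin 3) ℂ × ℤ :=
  (p.1 * q.1, p.2 + q.2 + sigmaZ p.1 q.1)

/-!
Since `exp j̃(g,τ) = j(g,τ)` and `j` is a cocycle for the action of `SU(2,1)` on `H`, the defect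
`j̃(gh,τ) - j̃(g,h*τ) - j̃(h,τ)` lies in `2πiℤ`. It is continuous on the convex set `H`, hence
constant, equal to its value `2πi σ(g,h)` at the base point. Multiplying by `w` and exponentiating
produces the factor `e^{2πiwσ(g,h)}`, which is exactly absorbed by `Φ`: the relation
`Φ(g,n+1) = Φ(g,n) e^{2πiw}`, forced by `Φ(I₃,1) = e^{2πiw}`, gives
`Φ(gh,0) = Φ(g,0) Φ(h,0) e^{-2πiwσ(g,h)}`. The power identity is `exp(wj̃)^b = exp(j̃)^a = j^a`.
-/

open ComplexConjugate
open scoped Real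

section

variable {g h : Matrix (Fin 3) (Fin 3) ℂ} {τ : ℂ × ℂ}

lemma Jmat_mul_self : Jmat * Jmat = 1 := by
  ext i j; fin_cases i <;> fin_cases j <;> simp [Jmat, Matrix.mul_apply, Fin.sum_univ_three]

lemma mul_Jmat_mul_conjTranspose (hG : gᴴ * Jmat * g = Jmat) : g * Jmat * gᴴ = Jmat := by
  have hleft : (Jmat * gᴴ * Jmat) * g = 1 := by
    rw [Matrix.mul_assoc, Matrix.mul_assoc, ← Matrix.mul_assoc gᴴ, hG, Jmat_mul_self]
  have hright := mul_eq_one_comm.mp hleft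
  calc g * Jmat * gᴴ = g * (Jmat * gᴴ * Jmat) * Jmat := by
        simp only [Matrix.mul_assoc, Jmat_mul_self, Matrix.mul_one]
    _ = Jmat := by rw [hright, Matrix.one_mul]

lemma SU21_mul_mem (hg : g ∈ SU21) (hh : h ∈ SU21) : g * h ∈ SU21 := by
  refine ⟨by rw [Matrix.det_mul, hg.1, hh.1, one_mul], ?_⟩
  calc (g * h)ᴴ * Jmat * (g * h) = hᴴ * (gᴴ * Jmat * g) * h := by
        simp only [Matrix.conjTranspose_mul, Matrix.mul_assoc]
    _ = Jmat := by rw [hg.2, hh.2]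

lemma bottom_row_isotropic (hg : g ∈ SU21) :
    g 2 0 * conj (g 2 2) + g 2 1 * conj (g 2 1) + g 2 2 * conj (g 2 0) = 0 := by
  have h22 := congrFun (congrFun (mul_Jmat_mul_conjTranspose hg.2) 2) 2
  simp [Matrix.mul_apply, Fin.sum_univ_three, Jmat] at h22
  linear_combination h22

lemma entry21_eq_zero (hg : g ∈ SU21) (h20 : g 2 0 = 0) : g 2 1 = 0 := by
  have h := bottom_row_isotropic hg
  rw [h20, Complex.mul_conj] at h
  simpa using h

lemma Xfun_ne_zero (hg : g ∈ SU21) : Xfun g ≠ 0 := by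
  by_cases h20 : g 2 0 = 0
  · intro h22
    have hdet := hg.1
    have h22' : g 2 2 = 0 := by simpa [Xfun, h20] using h22
    rw [Matrix.det_fin_three, h20, entry21_eq_zero hg h20, h22'] at hdet
    simp at hdet
  · simp [Xfun, h20]

lemma re_neg_add_mul_add_pos {α β : ℂ} (hτ : τ ∈ UpperH) (hαβ : 2 * β.re + normSq α = 0) :
    0 < (-(τ.1 + α * τ.2 + β)).re := by
  have hτ' : 2 * τ.1.re + ‖τ.2‖ ^ 2 < 0 := by rw [Complex.sq_norm]; exact hτ
  have hαβ' : 2 * β.re + ‖α‖ ^ 2 = 0 := by rw [Complex.sq_norm]; exact hαβ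
  have hcs : (α * τ.2).re ≤ ‖α‖ * ‖τ.2‖ := (Complex.re_le_norm _).trans_eq (norm_mul _ _)
  simp only [Complex.neg_re, Complex.add_re]
  -- the left side exceeds `(‖τ.2‖ - ‖α‖) ^ 2 / 2`
  nlinarith [sq_nonneg (‖τ.2‖ - ‖α‖)]

lemma re_jcocycle_div_Xfun_pos (hg : g ∈ SU21) (hτ : τ ∈ UpperH) :
    0 < (jcocycle g τ / Xfun g).re := by
  by_cases h20 : g 2 0 = 0
  · have hX : Xfun g = g 2 2 := by simp [Xfun, h20]
    have h22 : g 2 2 ≠ 0 := hX ▸ Xfun_ne_zero hg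
    simp [jcocycle, hX, h20, entry21_eq_zero hg h20, h22]
  · set α := g 2 1 / g 2 0 with hα
    set β := g 2 2 / g 2 0 with hβ
    have hratio : jcocycle g τ / Xfun g = -(τ.1 + α * τ.2 + β) := by
      simp only [jcocycle, Xfun, if_pos h20, hα, hβ]
      field_simp
    have hiso : 2 * β.re + normSq α = 0 := by
      have hc : conj β + α * conj α + β = 0 := by
        have hc20 : conj (g 2 0) ≠ 0 := by simpa using h20
        simp only [hα, hβ, map_div₀]
        field_simp
        linear_combination bottom_row_isotropic hg
      have hre := congrArg Complex.re hc
      rw [Complex.mul_conj] at hre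
      simp only [Complex.add_re, Complex.conj_re, Complex.ofReal_re, Complex.zero_re] at hre
      linarith
    rw [hratio]
    exact re_neg_add_mul_add_pos hτ hiso

lemma jcocycle_ne_zero (hg : g ∈ SU21) (hτ : τ ∈ UpperH) : jcocycle g τ ≠ 0 := by
  intro h
  simpa [h] using re_jcocycle_div_Xfun_pos hg hτ

lemma jcocycle_mul (hj : jcocycle h τ ≠ 0) :
    jcocycle (g * h) τ = jcocycle g (act h τ) * jcocycle h τ := by
  simp only [jcocycle, act, Matrix.mul_apply, Fin.sum_univ_three] at *
  field_simp
  ring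

def homVec (τ : ℂ × ℂ) : Fin 3 → ℂ := ![τ.1, τ.2, 1]

def hermForm (v : Fin 3 → ℂ) : ℂ := star v ⬝ᵥ (Jmat *ᵥ v)

lemma hermForm_homVec (τ : ℂ × ℂ) :
    hermForm (homVec τ) = ((2 * τ.1.re + normSq τ.2 : ℝ) : ℂ) := by
  apply Complex.ext <;>
    simp [hermForm, homVec, Jmat, dotProduct, Fin.sum_univ_three, Complex.normSq_apply] <;> ring

lemma hermForm_mulVec (hG : gᴴ * Jmat * g = Jmat) (v : Fin 3 → ℂ) :
    hermForm (g *ᵥ v) = hermForm v := by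
  rw [hermForm, Matrix.star_mulVec, ← Matrix.dotProduct_mulVec, Matrix.mulVec_mulVec,
    Matrix.mulVec_mulVec, hG, hermForm]

lemma hermForm_smul (c : ℂ) (v : Fin 3 → ℂ) : hermForm (c • v) = normSq c * hermForm v := by
  rw [hermForm, hermForm, Matrix.mulVec_smul, star_smul, smul_dotProduct, dotProduct_smul,
    smul_smul, smul_eq_mul, ← Complex.mul_conj, mul_comm c]
  rfl

lemma mulVec_homVec (hj : jcocycle g τ ≠ 0) :
    g *ᵥ homVec τ = jcocycle g τ • homVec (act g τ) := by
  unfold act jcocycle at *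
  ext i
  fin_cases i <;>
    simp [homVec, Matrix.mulVec, dotProduct, Fin.sum_univ_three, mul_div_cancel₀ _ hj]

lemma act_mem_UpperH (hg : g ∈ SU21) (hτ : τ ∈ UpperH) : act g τ ∈ UpperH := by
  have hj := jcocycle_ne_zero hg hτ
  have hform := hermForm_mulVec hg.2 (homVec τ)
  rw [mulVec_homVec hj, hermForm_smul, hermForm_homVec, hermForm_homVec] at hform
  have hpos : 0 < normSq (jcocycle g τ) := Complex.normSq_pos.2 hj
  have hτ' : 2 * τ.1.re + normSq τ.2 < 0 := hτ
  change 2 * (act g τ).1.re + normSq (act g τ).2 < 0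
  have hreal : normSq (jcocycle g τ) * (2 * (act g τ).1.re + normSq (act g τ).2)
      = 2 * τ.1.re + normSq τ.2 := by exact_mod_cast hform
  nlinarith

lemma exp_jtilde (hg : g ∈ SU21) (hτ : τ ∈ UpperH) : exp (jtilde g τ) = jcocycle g τ := by
  have hjX : jcocycle g τ / Xfun g ≠ 0 := by
    intro h
    simpa [h] using re_jcocycle_div_Xfun_pos hg hτ
  rw [jtilde, exp_add, exp_log hjX, exp_log (Xfun_ne_zero hg), div_mul_cancel₀ _ (Xfun_ne_zero hg)]

lemma convex_UpperH : Convex ℝ UpperH := by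
  have hsq : ConvexOn ℝ Set.univ fun z : ℂ => ‖z‖ ^ 2 :=
    (convexOn_norm convex_univ).pow (fun _ _ => norm_nonneg _) 2
  have hre : ConvexOn ℝ Set.univ fun τ : ℂ × ℂ => 2 * τ.1.re :=
    ((2 : ℝ) • Complex.reLm.comp (LinearMap.fst ℝ ℂ ℂ)).convexOn convex_univ
  have hH : UpperH = {τ ∈ Set.univ | 2 * τ.1.re + ‖τ.2‖ ^ 2 < 0} := by
    ext τ
    simp [UpperH, Complex.sq_norm]
  rw [hH]
  exact (hre.add (hsq.comp_linearMap (LinearMap.snd ℝ ℂ ℂ))).convex_lt 0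

lemma continuousOn_jtilde (hg : g ∈ SU21) : ContinuousOn (jtilde g) UpperH := by
  have hj : Continuous (jcocycle g) := by unfold jcocycle; fun_prop
  exact ((hj.div_const _).continuousOn.clog fun τ hτ =>
    Or.inl (re_jcocycle_div_Xfun_pos hg hτ)).add continuousOn_const

lemma continuousOn_act (hg : g ∈ SU21) : ContinuousOn (act g) UpperH := by
  have hj : Continuous (jcocycle g) := by unfold jcocycle; fun_prop
  unfold act
  refine ContinuousOn.prodMk ?_ ?_ <;>
    exact ContinuousOn.div (by fun_prop) hj.continuousOn fun τ hτ => jcocycle_ne_zero hg hτ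

def jtildeDefect (g h : Matrix (Fin 3) (Fin 3) ℂ) (τ : ℂ × ℂ) : ℂ :=
  jtilde (g * h) τ - jtilde g (act h τ) - jtilde h τ

lemma jtildeDefect_mem_zmultiples (hg : g ∈ SU21) (hh : h ∈ SU21) (hτ : τ ∈ UpperH) :
    jtildeDefect g h τ ∈ AddSubgroup.zmultiples (2 * π * I) := by
  have hj := jcocycle_ne_zero hh hτ
  have hexp : exp (jtildeDefect g h τ) = 1 := by
    rw [jtildeDefect, exp_sub, exp_sub, exp_jtilde (SU21_mul_mem hg hh) hτ,
      exp_jtilde hg (act_mem_UpperH hh hτ), exp_jtilde hh hτ, jcocycle_mul hj,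
      div_div, div_self (mul_ne_zero (jcocycle_ne_zero hg (act_mem_UpperH hh hτ)) hj)]
  obtain ⟨n, hn⟩ := Complex.exp_eq_one_iff.mp hexp
  exact AddSubgroup.mem_zmultiples_iff.mpr ⟨n, by rw [hn, zsmul_eq_mul]⟩

/-- On the connected set `UpperH` the continuous defect takes values in the discrete set
`2πiℤ`, so it is constant. -/
lemma jtildeDefect_eq_sigmaZ (hg : g ∈ SU21) (hh : h ∈ SU21) (hτ : τ ∈ UpperH) :
    jtildeDefect g h τ = sigmaZ g h * (2 * π * I) := by
  have hcont : ContinuousOn (jtildeDefect g h) UpperH :=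
    ((continuousOn_jtilde (SU21_mul_mem hg hh)).sub
      ((continuousOn_jtilde hg).comp (continuousOn_act hh) fun _ => act_mem_UpperH hh)).sub
      (continuousOn_jtilde hh)
  have hτ0 : τ0 ∈ UpperH := by simp [τ0, UpperH]
  have hconst : jtildeDefect g h τ = jtildeDefect g h τ0 :=
    convex_UpperH.isPreconnected.constant_of_mapsTo
      (isDiscrete_iff_discreteTopology.mpr (NormedSpace.discreteTopology_zmultiples _)) hcont
      (fun _ => jtildeDefect_mem_zmultiples hg hh) hτ hτ0
  obtain ⟨n, hn⟩ := AddSubgroup.mem_zmultiples_iff.mp (jtildeDefect_mem_zmultiples hg hh hτ0)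
  have hσ : sigmaZ g h = n := by
    have h2πI : (2 * π * I : ℂ) ≠ 0 := by simp [Real.pi_ne_zero]
    have hC : sigmaC g h = n := by
      rw [sigmaC, ← jtildeDefect, ← hn, zsmul_eq_mul, mul_div_cancel_right₀ _ h2πI]
    simp [sigmaZ, hC]
  rw [hconst, ← hn, hσ, zsmul_eq_mul]

lemma jtilde_one (τ : ℂ × ℂ) : jtilde 1 τ = 0 := by
  simp [jtilde, jcocycle, Xfun]

lemma act_one (τ : ℂ × ℂ) : act 1 τ = τ := by
  simp [act, jcocycle]

lemma sigmaZ_one_right (g : Matrix (Fin 3) (Fin 3) ℂ) : sigmaZ g 1 = 0 := by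
  simp [sigmaZ, sigmaC, act_one, jtilde_one]

lemma eq_mul_zpow_of_add_one {G : Type*} [GroupWithZero G] {f : ℤ → G} {c : G} (hc : c ≠ 0)
    (hf : ∀ n, f (n + 1) = f n * c) (n : ℤ) : f n = f 0 * c ^ n := by
  induction n using Int.induction_on with
  | zero => simp
  | succ k ih => rw [hf, ih, mul_assoc, zpow_add_one₀ hc]
  | pred k ih =>
    have hk := hf (-k - 1)
    rw [sub_add_cancel, ih] at hk
    rw [zpow_sub_one₀ hc, ← mul_assoc, hk, mul_inv_cancel_right₀ hc]

lemma exp_mul_pow_of_eq_div {z : ℂ} {w : ℚ} {a : ℤ} {b : ℕ} (hb : b ≠ 0) (hw : w = a / b) :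
    exp (w * z) ^ b = exp z ^ a := by
  have hwb : (w : ℂ) * b = a := by
    rw [hw]
    push_cast
    field_simp
  rw [← exp_nat_mul, ← exp_int_mul, ← hwb]
  ring_nf

end

theorem character_gives_multiplier_system_general
    (Γ : Set (Matrix (Fin 3) (Fin 3) ℂ)) (hΓsub : Γ ⊆ SU21)
    (hΓone : (1 : Matrix (Fin 3) (Fin 3) ℂ) ∈ Γ)
    (w : ℚ) (a : ℤ) (b : ℕ) (hb : b ≠ 0) (hw : w = (a : ℚ) / (b : ℚ))
    (Φ : Matrix (Fin 3) (Fin 3) ℂ → ℤ → ℂ)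
    (hΦhom : ∀ g ∈ Γ, ∀ h ∈ Γ, ∀ n m : ℤ,
      Φ (g * h) (n + m + sigmaZ g h) = Φ g n * Φ h m)
    (hΦ1 : Φ 1 1 = Complex.exp (2 * Real.pi * Complex.I * (w : ℂ))) :
    let ℓ : Matrix (Fin 3) (Fin 3) ℂ → (ℂ × ℂ) → ℂ := fun g τ =>
      Φ g 0 * Complex.exp ((w : ℂ) * jtilde g τ)
    (∀ g ∈ Γ, ∀ h ∈ Γ, ∀ τ ∈ UpperH,
      ℓ (g * h) τ = ℓ g (act h τ) * ℓ h τ) ∧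
    (∀ g ∈ Γ, ∀ τ ∈ UpperH, ℓ g τ ^ b = Φ g 0 ^ b * jcocycle g τ ^ a) := by
  intro ℓ
  set c := exp (2 * π * I * w)
  have hΦshift : ∀ g ∈ Γ, ∀ n, Φ g n = Φ g 0 * c ^ n := fun g hg =>
    eq_mul_zpow_of_add_one (exp_ne_zero _) fun n => by
      simpa [sigmaZ_one_right, hΦ1] using hΦhom g hg 1 hΓone n 1
  refine ⟨fun g hg h hh τ hτ => ?_, fun g hg τ hτ => ?_⟩
  · have hΦmul : Φ (g * h) 0 = Φ g 0 * Φ h 0 * c ^ (-sigmaZ g h) := by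
      have := hΦhom g hg h hh (-sigmaZ g h) 0
      rw [add_zero, neg_add_cancel] at this
      rw [this, hΦshift g hg]
      ring
    have hjtilde :
        jtilde (g * h) τ = jtilde g (act h τ) + jtilde h τ + sigmaZ g h * (2 * π * I) := by
      rw [← jtildeDefect_eq_sigmaZ (hΓsub hg) (hΓsub hh) hτ, jtildeDefect]
      ring
    have hexpσ : exp (w * (sigmaZ g h * (2 * π * I))) = c ^ sigmaZ g h := by
      rw [← exp_int_mul]
      ring_nf
    have hc : c ≠ 0 := exp_ne_zero _
    simp only [ℓ, hΦmul, hjtilde, mul_add, exp_add, hexpσ, _root_.zpow_neg]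
    field_simp
  · simp only [ℓ, mul_pow, exp_mul_pow_of_eq_div hb hw, exp_jtilde (hΓsub hg) hτ]

/-- Conversely, a homomorphism `Φ : Γ̃ → ℂˣ` with `Φ(I₃,1) = e^{2πi w}` gives
rise to a weight-`w` multiplier system `ℓ(g,τ) = Φ(g,0)·exp(w·j̃(g,τ))`; in
particular if `w = a/b` then `ℓ(g,τ)^b = Φ(g,0)^b · j(g,τ)^a`. -/
theorem character_gives_multiplier_system
    (Γ : Set (Matrix (Fin 3) (Fin 3) ℂ)) (hΓsub : Γ ⊆ SU21)
    (hΓone : (1 : Matrix (Fin 3) (Fin 3) ℂ) ∈ Γ)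
    (hΓmul : ∀ g ∈ Γ, ∀ h ∈ Γ, g * h ∈ Γ)
    (w : ℚ) (a : ℤ) (b : ℕ) (hb : b ≠ 0) (hw : w = (a : ℚ) / (b : ℚ))
    (Φ : Matrix (Fin 3) (Fin 3) ℂ → ℤ → ℂ)
    (hΦhom : ∀ g ∈ Γ, ∀ h ∈ Γ, ∀ n m : ℤ,
      Φ (g * h) (n + m + sigmaZ g h) = Φ g n * Φ h m)
    (hΦ1 : Φ 1 1 = Complex.exp (2 * Real.pi * Complex.I * (w : ℂ))) :
    let ℓ : Matrix (Fin 3) (Fin 3) ℂ → (ℂ × ℂ) → ℂ := fun g τ =>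
      Φ g 0 * Complex.exp ((w : ℂ) * jtilde g τ)
    (∀ g ∈ Γ, ∀ h ∈ Γ, ∀ τ ∈ UpperH,
      ℓ (g * h) τ = ℓ g (act h τ) * ℓ h τ) ∧
    (∀ g ∈ Γ, ∀ τ ∈ UpperH, ℓ g τ ^ b = Φ g 0 ^ b * jcocycle g τ ^ a) :=
  character_gives_multiplier_system_general Γ hΓsub hΓone w a b hb hw Φ hΦhom hΦ1
end
end

section
/- Let Υ = {(g_{ij}) ∈ Γ(√−3) : g_{11} ≡ 1 mod 3}. If g ∈ Υ then g_{22} ≡ 1 mod 3 and g_{33} ≡ 1 mod 3. -/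
noncomputable section

open Matrix Complex

/-- The primitive cube root of unity `ζ = e^{2πi/3}`. -/
def zeta3 : ℂ := Complex.exp (2 * Real.pi * Complex.I / 3)

/-- The ring `ℤ[ζ]` of Eisenstein integers, as a subset of `ℂ`. -/
def Eis : Set ℂ := {x | ∃ a b : ℤ, x = (a : ℂ) + (b : ℂ) * zeta3}

/-- The element `√−3 = 2ζ + 1 = ζ − ζ²`. -/
def sqrtm3 : ℂ := 2 * zeta3 + 1

/-- `Γ(1) = SU(2,1) ∩ SL₃(ℤ[ζ])`. -/
def Gamma1 : Set (Matrix (Fin 3) (Fin 3) ℂ) :=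
  {g | g ∈ SU21 ∧ ∀ i j, g i j ∈ Eis}

/-- The principal congruence subgroup `Γ(√−3)`. -/
def GammaSqrt3 : Set (Matrix (Fin 3) (Fin 3) ℂ) :=
  {g | g ∈ Gamma1 ∧ ∀ i j, ∃ t ∈ Eis,
    g i j - (1 : Matrix (Fin 3) (Fin 3) ℂ) i j = sqrtm3 * t}

/-- The subgroup `Υ = {g ∈ Γ(√−3) : g₁₁ ≡ 1 mod 3}`. -/
def Upsilon : Set (Matrix (Fin 3) (Fin 3) ℂ) :=
  {g | g ∈ GammaSqrt3 ∧ ∃ t ∈ Eis, g 0 0 - 1 = 3 * t}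


/- ### Auxiliary lemmas -/

lemma zeta3_prim : IsPrimitiveRoot zeta3 3 := by
  have := Complex.isPrimitiveRoot_exp 3 (by norm_num)
  simpa [zeta3] using this

lemma zeta3_cube : zeta3 ^ 3 = 1 := zeta3_prim.pow_eq_one

lemma zeta3_sq : zeta3 ^ 2 = -1 - zeta3 := by
  have h1 : zeta3 ≠ 1 := zeta3_prim.ne_one (by norm_num)
  have h0 : (zeta3 - 1) * (zeta3 ^ 2 + zeta3 + 1) = 0 := by
    linear_combination zeta3_cube
  rcases mul_eq_zero.mp h0 with h | h
  · exact absurd (by linear_combination h) h1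
  · linear_combination h

lemma conj_zeta3 : (starRingEnd ℂ) zeta3 = -1 - zeta3 := by
  have hz : zeta3 ≠ 0 := zeta3_prim.ne_zero (by norm_num)
  have h1 : (starRingEnd ℂ) zeta3 * zeta3 = 1 := by
    rw [zeta3, ← Complex.exp_conj, ← Complex.exp_add]
    have : (starRingEnd ℂ) (2 * (Real.pi:ℂ) * Complex.I / 3) + 2 * (Real.pi:ℂ) * Complex.I / 3 = 0 := by
      simp [map_div₀, _root_.map_mul, Complex.conj_I, Complex.conj_ofReal, map_ofNat]
      ring
    rw [this, Complex.exp_zero]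
  have h2 : ((-1 : ℂ) - zeta3) * zeta3 = 1 := by linear_combination -zeta3_sq
  exact mul_right_cancel₀ hz (by rw [h1, h2])

lemma sqrtm3_sq : sqrtm3 ^ 2 = -3 := by
  simp only [sqrtm3]; linear_combination 4 * zeta3_sq

lemma conj_sqrtm3 : (starRingEnd ℂ) sqrtm3 = -sqrtm3 := by
  simp only [sqrtm3, map_add, _root_.map_mul, map_ofNat, _root_.map_one, conj_zeta3]; ring

lemma one_mem_Eis : (1 : ℂ) ∈ Eis := ⟨1, 0, by norm_num⟩
lemma sqrtm3_mem_Eis : sqrtm3 ∈ Eis := ⟨1, 2, by simp [sqrtm3]; ring⟩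
lemma three_mem_Eis : (3 : ℂ) ∈ Eis := ⟨3, 0, by norm_num⟩

lemma add_mem_Eis {x y : ℂ} (hx : x ∈ Eis) (hy : y ∈ Eis) : x + y ∈ Eis := by
  obtain ⟨a, b, rfl⟩ := hx; obtain ⟨c, d, rfl⟩ := hy
  exact ⟨a + c, b + d, by push_cast; ring⟩

lemma neg_mem_Eis {x : ℂ} (hx : x ∈ Eis) : -x ∈ Eis := by
  obtain ⟨a, b, rfl⟩ := hx; exact ⟨-a, -b, by push_cast; ring⟩

lemma sub_mem_Eis {x y : ℂ} (hx : x ∈ Eis) (hy : y ∈ Eis) : x - y ∈ Eis := by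
  simpa [sub_eq_add_neg] using add_mem_Eis hx (neg_mem_Eis hy)

lemma mul_mem_Eis {x y : ℂ} (hx : x ∈ Eis) (hy : y ∈ Eis) : x * y ∈ Eis := by
  obtain ⟨a, b, rfl⟩ := hx; obtain ⟨c, d, rfl⟩ := hy
  refine ⟨a * c - b * d, a * d + b * c - b * d, ?_⟩
  push_cast
  linear_combination ((b : ℂ) * (d : ℂ)) * zeta3_sq

lemma conj_mem_Eis {x : ℂ} (hx : x ∈ Eis) : (starRingEnd ℂ) x ∈ Eis := by
  obtain ⟨a, b, rfl⟩ := hx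
  refine ⟨a - b, -b, ?_⟩
  rw [map_add, _root_.map_mul, map_intCast, map_intCast, conj_zeta3]
  push_cast; ring

/-- If `g ∈ Υ` then `g₂₂ ≡ 1 mod 3` and `g₃₃ ≡ 1 mod 3`. -/
theorem diag_congruences_of_mem_Upsilon
    (g : Matrix (Fin 3) (Fin 3) ℂ) (hg : g ∈ Upsilon) :
    (∃ t ∈ Eis, g 1 1 - 1 = 3 * t) ∧ (∃ t ∈ Eis, g 2 2 - 1 = 3 * t) := by
  obtain ⟨⟨⟨⟨hdet, hJ⟩, hEis⟩, hcong⟩, a, haE, ha⟩ := hg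
  -- off-diagonal entries are divisible by sqrtm3
  have hod : ∀ i j, i ≠ j → ∃ t ∈ Eis, g i j = sqrtm3 * t := by
    intro i j hij
    obtain ⟨t, ht, h⟩ := hcong i j
    exact ⟨t, ht, by simpa [Matrix.one_apply_ne hij] using h⟩
  obtain ⟨s10, hs10E, hs10⟩ := hod 1 0 (by decide)
  obtain ⟨s20, hs20E, hs20⟩ := hod 2 0 (by decide)
  obtain ⟨s01, hs01E, hs01⟩ := hod 0 1 (by decide)
  obtain ⟨s21, hs21E, hs21⟩ := hod 2 1 (by decide)
  obtain ⟨s02, hs02E, hs02⟩ := hod 0 2 (by decide)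
  obtain ⟨s12, hs12E, hs12⟩ := hod 1 2 (by decide)
  have hA : g 0 0 = 1 + 3 * a := by linear_combination ha
  have hca : (starRingEnd ℂ) (g 0 0) = 1 + 3 * (starRingEnd ℂ) a := by
    rw [hA, map_add, _root_.map_mul, _root_.map_one, map_ofNat]
  have hc10 : (starRingEnd ℂ) (g 1 0) = -sqrtm3 * (starRingEnd ℂ) s10 := by
    rw [hs10, _root_.map_mul, conj_sqrtm3]
  have hc20 : (starRingEnd ℂ) (g 2 0) = -sqrtm3 * (starRingEnd ℂ) s20 := by
    rw [hs20, _root_.map_mul, conj_sqrtm3]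
  -- the (0,2) entry of the unitarity relation
  have h02 : (starRingEnd ℂ) (g 2 0) * g 0 2 + (starRingEnd ℂ) (g 1 0) * g 1 2
      + (starRingEnd ℂ) (g 0 0) * g 2 2 = 1 := by
    have h := congr_fun (congr_fun hJ 0) 2
    simp [Matrix.mul_apply, Fin.sum_univ_three, Jmat, Matrix.conjTranspose_apply] at h
    linear_combination h
  rw [hca, hc10, hc20, hs02, hs12] at h02
  -- g 2 2 ≡ 1 mod 3
  have h22 : ∃ t ∈ Eis, g 2 2 - 1 = 3 * t := by
    refine ⟨-((starRingEnd ℂ) a * g 2 2) - (starRingEnd ℂ) s20 * s02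
      - (starRingEnd ℂ) s10 * s12, ?_, ?_⟩
    · exact sub_mem_Eis (sub_mem_Eis (neg_mem_Eis (mul_mem_Eis (conj_mem_Eis haE) (hEis 2 2)))
        (mul_mem_Eis (conj_mem_Eis hs20E) hs02E)) (mul_mem_Eis (conj_mem_Eis hs10E) hs12E)
    · linear_combination h02 + ((starRingEnd ℂ) s20 * s02 + (starRingEnd ℂ) s10 * s12) * sqrtm3_sq
  obtain ⟨b, hbE, hb⟩ := h22
  have hB : g 2 2 = 1 + 3 * b := by linear_combination hb
  -- the determinant relation
  have hd := hdet
  rw [Matrix.det_fin_three] at hd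
  rw [hA, hB, hs01, hs10, hs02, hs20, hs12, hs21] at hd
  refine ⟨⟨-((a + b + 3 * a * b) * g 1 1 + (1 + 3 * a) * s12 * s21 + (1 + 3 * b) * s01 * s10
      - sqrtm3 * s01 * s12 * s20 - sqrtm3 * s02 * s10 * s21 + g 1 1 * s02 * s20), ?_, ?_⟩,
    ⟨b, hbE, hb⟩⟩
  · refine neg_mem_Eis ?_
    have h3 := three_mem_Eis
    have h1 := one_mem_Eis
    have hq := sqrtm3_mem_Eis
    exact add_mem_Eis (sub_mem_Eis (sub_mem_Eis (add_mem_Eis (add_mem_Eis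
      (mul_mem_Eis (add_mem_Eis (add_mem_Eis haE hbE) (mul_mem_Eis (mul_mem_Eis h3 haE) hbE)) (hEis 1 1))
      (mul_mem_Eis (mul_mem_Eis (add_mem_Eis h1 (mul_mem_Eis h3 haE)) hs12E) hs21E))
      (mul_mem_Eis (mul_mem_Eis (add_mem_Eis h1 (mul_mem_Eis h3 hbE)) hs01E) hs10E))
      (mul_mem_Eis (mul_mem_Eis (mul_mem_Eis hq hs01E) hs12E) hs20E))
      (mul_mem_Eis (mul_mem_Eis (mul_mem_Eis hq hs02E) hs10E) hs21E))
      (mul_mem_Eis (mul_mem_Eis (hEis 1 1) hs02E) hs20E)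
  · linear_combination hd + ((1 + 3 * a) * s12 * s21 + (1 + 3 * b) * s01 * s10
      - sqrtm3 * s01 * s12 * s20 - sqrtm3 * s02 * s10 * s21 + g 1 1 * s02 * s20) * sqrtm3_sq
end
end
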